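/- For each integer k ≥ 0, let h_k(z,w) = (3·6^k)^{-1} · log(1 + |w|^{6·6^k} + |z|^{4·6^k}). Then h_k converges uniformly on all of ℂ², as k → ∞, to the function g₂(z,w) = max(log⁺ |w|², (2/3)·log⁺ |z|²) = log⁺(max(|w|², |z|^{4/3})). -/

import Mathlib

/- Since `max A B ≤ 1 + A + B ≤ 3 max(1, A, B)`, the function `log (1 + A + B)` differs from
`log⁺ (max A B)` by at most `log 3`. With `A = |w|^{6·6^k}`, `B = |z|^{4·6^k}` and after division
by `3·6^k`, the quantity `log⁺ (max A B)` becomes `g₂` exactly, because `log⁺` commutes with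
`max` and is positively homogeneous under powers; the error `log 3 / (3·6^k)` is independent of
the point and tends to `0`. -/

open Real Filter

/-- `log⁺ r = max (log r) 0`. -/
noncomputable def logPlus (r : ℝ) : ℝ := max (Real.log r) 0

lemma logPlus_le_logPlus {x y : ℝ} (hx : 0 ≤ x) (hxy : x ≤ y) : logPlus x ≤ logPlus y := by
  rcases hx.eq_or_lt with rfl | hx
  · simp [logPlus]
  · exact max_le_max (log_le_log hx hxy) le_rfl

lemma logPlus_max {x y : ℝ} (hx : 0 ≤ x) (hy : 0 ≤ y) :
    logPlus (max x y) = max (logPlus x) (logPlus y) := by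
  rcases le_total x y with h | h
  · rw [max_eq_right h, max_eq_right (logPlus_le_logPlus hx h)]
  · rw [max_eq_left h, max_eq_left (logPlus_le_logPlus hy h)]

lemma logPlus_pow (a : ℝ) (m : ℕ) : logPlus (a ^ m) = m * logPlus a := by
  rw [logPlus, logPlus, log_pow, mul_max_of_nonneg _ _ m.cast_nonneg, mul_zero]

lemma logPlus_rpow {b t : ℝ} (hb : 0 ≤ b) (ht : 0 < t) : logPlus (b ^ t) = t * logPlus b := by
  rcases hb.eq_or_lt with rfl | hb
  · simp [logPlus, zero_rpow ht.ne']
  · rw [logPlus, logPlus, log_rpow hb, mul_max_of_nonneg _ _ ht.le, mul_zero]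

lemma logPlus_eq_log_max_one {r : ℝ} (hr : 0 ≤ r) : logPlus r = log (max 1 r) := by
  rcases le_total r 1 with h | h
  · rw [max_eq_left h, log_one, logPlus, max_eq_right (log_nonpos hr h)]
  · rw [max_eq_right h, logPlus, max_eq_left (log_nonneg h)]

lemma abs_log_one_add_add_sub_logPlus_max_le {A B : ℝ} (hA : 0 ≤ A) (hB : 0 ≤ B) :
    |log (1 + A + B) - logPlus (max A B)| ≤ log 3 := by
  rw [logPlus_eq_log_max_one (hA.trans (le_max_left A B))]
  set M := max 1 (max A B)
  have hM : 1 ≤ M := le_max_left _ _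
  have hMA : A ≤ M := (le_max_left A B).trans (le_max_right _ _)
  have hMB : B ≤ M := (le_max_right A B).trans (le_max_right _ _)
  have hlower : log M ≤ log (1 + A + B) :=
    log_le_log (by linarith) (max_le (by linarith) (max_le (by linarith) (by linarith)))
  have hupper : log (1 + A + B) ≤ log 3 + log M := by
    rw [← log_mul (by norm_num) (by linarith)]
    exact log_le_log (by linarith) (by linarith)
  rw [abs_of_nonneg (sub_nonneg.2 hlower)]
  linarith

lemma logPlus_max_pow_eq {a b : ℝ} (ha : 0 ≤ a) (hb : 0 ≤ b) (k : ℕ) :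
    ((3 : ℝ) * 6 ^ k)⁻¹ * logPlus (max (a ^ (6 * 6 ^ k)) (b ^ (4 * 6 ^ k))) =
      max (logPlus (a ^ 2)) (2 / 3 * logPlus (b ^ 2)) := by
  rw [logPlus_max (by positivity) (by positivity), mul_max_of_nonneg _ _ (by positivity),
    logPlus_pow, logPlus_pow, logPlus_pow, logPlus_pow]
  congr 1 <;> push_cast <;> field_simp <;> ring

lemma tendstoUniformly_of_dist_le {ι α β : Type*} [PseudoMetricSpace β] {l : Filter ι}
    {F : ι → α → β} {f : α → β} {e : ι → ℝ} (hdist : ∀ i x, dist (f x) (F i x) ≤ e i)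
    (he : Tendsto e l (nhds 0)) : TendstoUniformly F f l := by
  rw [Metric.tendstoUniformly_iff]
  intro ε hε
  filter_upwards [he.eventually (gt_mem_nhds hε)] with i hi x
  exact (hdist i x).trans_lt hi

/-- The functions `h_k(z,w) = (3·6^k)⁻¹ · log(1 + |w|^{6·6^k} + |z|^{4·6^k})` converge
uniformly on all of `ℂ²` to
`g₂(z,w) = max(log⁺ |w|², (2/3)·log⁺ |z|²) = log⁺(max(|w|², |z|^{4/3}))`. -/
theorem stmt11 :
    (∀ z w : ℂ,
      max (logPlus (‖w‖ ^ 2)) (2 / 3 * logPlus (‖z‖ ^ 2)) =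
        logPlus (max (‖w‖ ^ 2) (‖z‖ ^ ((4 : ℝ) / 3)))) ∧
    TendstoUniformly
      (fun (k : ℕ) (p : ℂ × ℂ) =>
        ((3 : ℝ) * 6 ^ k)⁻¹ *
          Real.log (1 + ‖p.2‖ ^ (6 * 6 ^ k) + ‖p.1‖ ^ (4 * 6 ^ k)))
      (fun p : ℂ × ℂ =>
        max (logPlus (‖p.2‖ ^ 2)) (2 / 3 * logPlus (‖p.1‖ ^ 2)))
      Filter.atTop := by
  refine ⟨fun z w => ?_, tendstoUniformly_of_dist_le (e := fun k => ((3 : ℝ) * 6 ^ k)⁻¹ * log 3)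
    (fun k p => ?_) ?_⟩
  · rw [logPlus_max (by positivity) (by positivity), logPlus_rpow (norm_nonneg z) (by norm_num),
      logPlus_pow, logPlus_pow]
    congr 1
    push_cast
    ring
  · rw [← logPlus_max_pow_eq (norm_nonneg _) (norm_nonneg _), dist_comm, dist_eq, ← mul_sub,
      abs_mul, abs_of_pos (by positivity)]
    gcongr
    exact abs_log_one_add_add_sub_logPlus_max_le (by positivity) (by positivity)
  · have h6 : Tendsto (fun k : ℕ => (3 : ℝ) * 6 ^ k) atTop atTop :=
      (tendsto_pow_atTop_atTop_of_one_lt (by norm_num)).const_mul_atTop (by norm_num)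
    simpa using h6.inv_tendsto_atTop.mul_const (log 3)
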